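/- arXiv:2310.12911 — 3 statements merged into one kernel-verified Lean document; each statement's English description precedes it below -/
import Mathlib

section
/- For fixed ρ ∈ (-1, 1) and y ∈ ℝ, the partial derivative of the bivariate normal CDF Φ_ρ(x, y) with respect to x equals φ(x)·Φ((y - ρx)/√(1 - ρ²)). -/
open MeasureTheory Set

noncomputable def phi (x : ℝ) : ℝ := (1 / Real.sqrt (2 * Real.pi)) * Real.exp (-x ^ 2 / 2)

noncomputable def Phi (x : ℝ) : ℝ := ∫ t in Set.Iic x, phi t

noncomputable def phiRho (ρ x y : ℝ) : ℝ :=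
  (1 / (2 * Real.pi * Real.sqrt (1 - ρ ^ 2))) *
    Real.exp (-(x ^ 2 - 2 * ρ * x * y + y ^ 2) / (2 * (1 - ρ ^ 2)))

noncomputable def PhiRho (ρ x y : ℝ) : ℝ :=
  ∫ s in Set.Iic x, ∫ t in Set.Iic y, phiRho ρ s t

noncomputable def PhiInv : ℝ → ℝ := Function.invFun Phi

lemma phi_cont : Continuous phi := by
  unfold phi; fun_prop

lemma phi_nonneg (x : ℝ) : 0 ≤ phi x := by
  unfold phi; positivity

lemma phi_integrable : Integrable phi := by
  have h : Integrable (fun x : ℝ => Real.exp (-(1/2 : ℝ) * x ^ 2)) :=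
    integrable_exp_neg_mul_sq (by norm_num)
  have := h.const_mul (1 / Real.sqrt (2 * Real.pi))
  convert this using 2 with t
  unfold phi
  ring_nf

lemma comp_affine (f : ℝ → ℝ) (c σ y : ℝ) (hσ : 0 < σ) :
    (∫ t in Iic y, f ((t - c) / σ)) = σ * ∫ u in Iic ((y - c) / σ), f u := by
  have h1 : ∀ t : ℝ, (Iic y).indicator (fun t => f ((t - c) / σ)) t
      = (Iic ((y - c) / σ)).indicator f ((t - c) / σ) := by
    intro t
    by_cases h : t ≤ y
    · rw [indicator_of_mem (mem_Iic.2 h), indicator_of_mem]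
      exact mem_Iic.2 ((div_le_div_iff_of_pos_right hσ).2 (by linarith))
    · rw [indicator_of_notMem (by simpa using h), indicator_of_notMem]
      simp only [mem_Iic, not_le] at *
      exact (div_lt_div_iff_of_pos_right hσ).2 (by linarith)
  calc ∫ t in Iic y, f ((t - c) / σ)
      = ∫ t, (Iic ((y - c) / σ)).indicator f ((t - c) / σ) := by
        rw [← integral_indicator measurableSet_Iic]
        exact integral_congr_ae (Filter.EventuallyEq.of_eq (funext h1))
    _ = ∫ u, (Iic ((y - c) / σ)).indicator f (u / σ) :=
        integral_sub_right_eq_self (fun u => (Iic ((y - c) / σ)).indicator f (u / σ)) c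
    _ = |σ| • ∫ u, (Iic ((y - c) / σ)).indicator f u := Measure.integral_comp_div _ σ
    _ = σ * ∫ u in Iic ((y - c) / σ), f u := by
        rw [integral_indicator measurableSet_Iic, abs_of_pos hσ, smul_eq_mul]

lemma phiRho_eq {ρ : ℝ} (hρ : ρ ∈ Set.Ioo (-1 : ℝ) 1) (s t : ℝ) :
    phiRho ρ s t = phi s * ((1 / Real.sqrt (1 - ρ ^ 2)) *
      phi ((t - ρ * s) / Real.sqrt (1 - ρ ^ 2))) := by
  obtain ⟨h1, h2⟩ := hρ
  have hr : (0:ℝ) < 1 - ρ ^ 2 := by nlinarith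
  set σ := Real.sqrt (1 - ρ ^ 2) with hσdef
  have hσ : 0 < σ := Real.sqrt_pos.2 hr
  have hσ2 : σ ^ 2 = 1 - ρ ^ 2 := Real.sq_sqrt hr.le
  have key : Real.exp (-(s ^ 2 - 2 * ρ * s * t + t ^ 2) / (2 * (1 - ρ ^ 2)))
      = Real.exp (-s ^ 2 / 2) * Real.exp (-((t - ρ * s) / σ) ^ 2 / 2) := by
    rw [← Real.exp_add]
    congr 1
    rw [div_pow, hσ2]
    field_simp
    ring
  have hcc : Real.sqrt (2 * Real.pi) * Real.sqrt (2 * Real.pi) = 2 * Real.pi :=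
    Real.mul_self_sqrt (by positivity)
  have hc : (1 : ℝ) / (2 * Real.pi * σ)
      = 1 / Real.sqrt (2 * Real.pi) * (1 / σ * (1 / Real.sqrt (2 * Real.pi))) := by
    rw [div_mul_div_comm, div_mul_div_comm, one_mul, one_mul]
    congr 1
    linear_combination -σ * hcc
  rw [phiRho, phi, phi, key, hc]
  ring

lemma inner_eq {ρ : ℝ} (hρ : ρ ∈ Set.Ioo (-1 : ℝ) 1) (y s : ℝ) :
    (∫ t in Iic y, phiRho ρ s t)
      = phi s * Phi ((y - ρ * s) / Real.sqrt (1 - ρ ^ 2)) := by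
  have hr : (0:ℝ) < 1 - ρ ^ 2 := by nlinarith [hρ.1, hρ.2]
  have hσ : 0 < Real.sqrt (1 - ρ ^ 2) := Real.sqrt_pos.2 hr
  simp_rw [phiRho_eq hρ]
  rw [MeasureTheory.integral_const_mul, MeasureTheory.integral_const_mul,
    comp_affine phi (ρ * s) _ y hσ, Phi]
  field_simp

lemma Phi_nonneg (z : ℝ) : 0 ≤ Phi z :=
  setIntegral_nonneg measurableSet_Iic fun t _ => phi_nonneg t

lemma Phi_le (z : ℝ) : Phi z ≤ ∫ t, phi t :=
  setIntegral_le_integral phi_integrable (Filter.Eventually.of_forall phi_nonneg)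

lemma Phi_cont : Continuous Phi := by
  have key : ∀ z : ℝ, Phi z = Phi 0 + ∫ t in (0:ℝ)..z, phi t := by
    intro z
    have := intervalIntegral.integral_Iic_sub_Iic
      (phi_integrable.integrableOn (s := Iic (0:ℝ)))
      (phi_integrable.integrableOn (s := Iic z)) (μ := volume)
    unfold Phi
    linarith
  have : Continuous fun z => Phi 0 + ∫ t in (0:ℝ)..z, phi t := by
    apply Continuous.add continuous_const
    exact intervalIntegral.continuous_primitive
      (fun a b => phi_integrable.intervalIntegrable) 0
  simpa [← funext key] using this

theorem stmt_3 (ρ y : ℝ) (hρ : ρ ∈ Set.Ioo (-1 : ℝ) 1) (x : ℝ) :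
    HasDerivAt (fun x' => PhiRho ρ x' y)
      (phi x * Phi ((y - ρ * x) / Real.sqrt (1 - ρ ^ 2))) x := by
  set g : ℝ → ℝ := fun s => phi s * Phi ((y - ρ * s) / Real.sqrt (1 - ρ ^ 2)) with hg
  have hr : (0:ℝ) < 1 - ρ ^ 2 := by nlinarith [hρ.1, hρ.2]
  have hσ : 0 < Real.sqrt (1 - ρ ^ 2) := Real.sqrt_pos.2 hr
  have hgcont : Continuous g := by
    apply phi_cont.mul
    exact Phi_cont.comp (by fun_prop)
  have hC : 0 ≤ ∫ t, phi t := integral_nonneg phi_nonneg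
  have hgint : Integrable g := by
    refine (phi_integrable.const_mul (∫ t, phi t)).mono
      hgcont.aestronglyMeasurable (Filter.Eventually.of_forall fun s => ?_)
    rw [Real.norm_eq_abs, Real.norm_eq_abs, abs_of_nonneg
      (mul_nonneg (phi_nonneg s) (Phi_nonneg _)), abs_of_nonneg
      (mul_nonneg hC (phi_nonneg s))]
    rw [mul_comm (∫ t, phi t)]
    exact mul_le_mul_of_nonneg_left (Phi_le _) (phi_nonneg s)
  have hfun : ∀ x' : ℝ, PhiRho ρ x' y = (∫ s in Iic x, g s) + ∫ s in x..x', g s := by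
    intro x'
    have h1 : PhiRho ρ x' y = ∫ s in Iic x', g s := by
      unfold PhiRho
      exact setIntegral_congr_fun measurableSet_Iic fun s _ => inner_eq hρ y s
    have h2 := intervalIntegral.integral_Iic_sub_Iic
      (hgint.integrableOn (s := Iic x)) (hgint.integrableOn (s := Iic x')) (μ := volume)
    rw [h1]; linarith
  have hderiv : HasDerivAt (fun x' => (∫ s in Iic x, g s) + ∫ s in x..x', g s) (g x) x := by
    refine HasDerivAt.const_add _ ?_
    exact intervalIntegral.integral_hasDerivAt_right (hgint.intervalIntegrable (a := x) (b := x))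
      ⟨univ, Filter.univ_mem, hgcont.aestronglyMeasurable.restrict⟩
      hgcont.continuousAt
  have : (fun x' => PhiRho ρ x' y) = fun x' => (∫ s in Iic x, g s) + ∫ s in x..x', g s :=
    funext hfun
  rw [this]
  exact hderiv
end

section
/- For β ≥ 0.94, t ∈ [0, 0.1], and b ∈ [0.14, 0.19], one has β²·π·(1 + ρ(t)) ≥ 0.681, where ρ(t) = (-(1-b)² + t²)/√((1 - (b²+t²))² - 4b²t²). -/
noncomputable def rhoT (b t : ℝ) : ℝ :=
  (-(1 - b) ^ 2 + t ^ 2) / Real.sqrt ((1 - (b ^ 2 + t ^ 2)) ^ 2 - 4 * b ^ 2 * t ^ 2)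

/- The radicand factors as ((1-b)² - t²)((1+b)² - t²) and the numerator is minus the first
factor, so ρ(t) is minus the square root of the ratio of the two factors; that ratio decreases
in t², whence ρ(t) ≥ ρ(0) = -(1-b)/(1+b) and 1 + ρ(t) ≥ 2b/(1+b). The rest is numerics. -/

lemma rhoT_eq_neg_sqrt_div {b t : ℝ} (h : t ^ 2 ≤ (1 - b) ^ 2) :
    rhoT b t = -Real.sqrt (((1 - b) ^ 2 - t ^ 2) / ((1 + b) ^ 2 - t ^ 2)) := by
  have hP : 0 ≤ (1 - b) ^ 2 - t ^ 2 := sub_nonneg.mpr h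
  have hfactor : (1 - (b ^ 2 + t ^ 2)) ^ 2 - 4 * b ^ 2 * t ^ 2
      = ((1 - b) ^ 2 - t ^ 2) * ((1 + b) ^ 2 - t ^ 2) := by ring
  have hnum : -(1 - b) ^ 2 + t ^ 2
      = -(Real.sqrt ((1 - b) ^ 2 - t ^ 2) * Real.sqrt ((1 - b) ^ 2 - t ^ 2)) := by
    rw [Real.mul_self_sqrt hP]; ring
  rw [rhoT, hfactor, hnum, Real.sqrt_mul hP, Real.sqrt_div hP, neg_div]
  rcases eq_or_ne (Real.sqrt ((1 - b) ^ 2 - t ^ 2)) 0 with h0 | h0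
  · simp [h0]
  · rw [mul_div_mul_left _ _ h0]

lemma neg_div_le_rhoT {b t : ℝ} (hb₀ : 0 ≤ b) (hb₁ : b ≤ 1) (h : t ^ 2 ≤ (1 - b) ^ 2) :
    -((1 - b) / (1 + b)) ≤ rhoT b t := by
  have hratio : ((1 - b) ^ 2 - t ^ 2) / ((1 + b) ^ 2 - t ^ 2) ≤ (1 - b) ^ 2 / (1 + b) ^ 2 := by
    rcases (show 0 ≤ (1 + b) ^ 2 - t ^ 2 by nlinarith).eq_or_lt with hQ | hQ
    · rw [← hQ, div_zero]; positivity
    · rw [div_le_div_iff₀ hQ (by positivity)]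
      nlinarith [sq_nonneg t]
  rw [rhoT_eq_neg_sqrt_div h, neg_le_neg_iff,
    ← Real.sqrt_sq (show 0 ≤ (1 - b) / (1 + b) by apply div_nonneg <;> linarith), div_pow]
  exact Real.sqrt_le_sqrt hratio

lemma two_mul_div_le_one_add_rhoT {b t : ℝ} (hb₀ : 0 ≤ b) (hb₁ : b ≤ 1)
    (h : t ^ 2 ≤ (1 - b) ^ 2) : 2 * b / (1 + b) ≤ 1 + rhoT b t := by
  have : 2 * b / (1 + b) = 1 - (1 - b) / (1 + b) := by
    field_simp
    ring
  linarith [neg_div_le_rhoT hb₀ hb₁ h]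

theorem stmt_9 (β b t : ℝ) (hβ : β ≥ 0.94) (hb : b ∈ Set.Icc (0.14 : ℝ) 0.19)
    (ht : t ∈ Set.Icc (0 : ℝ) 0.1) :
    β ^ 2 * Real.pi * (1 + rhoT b t) ≥ 0.681 := by
  obtain ⟨hb₁, hb₂⟩ := hb
  obtain ⟨ht₁, ht₂⟩ := ht
  have hρ : 0.2456 ≤ 1 + rhoT b t :=
    calc (0.2456 : ℝ) ≤ 2 * b / (1 + b) := by rw [le_div_iff₀ (by linarith)]; linarith
      _ ≤ 1 + rhoT b t := two_mul_div_le_one_add_rhoT (by linarith) (by linarith) (by nlinarith)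
  have hβπ : 2.7759 ≤ β ^ 2 * Real.pi :=
    calc (2.7759 : ℝ) ≤ 0.94 ^ 2 * 3.141592 := by norm_num
      _ ≤ β ^ 2 * Real.pi := by gcongr; exact Real.pi_gt_d6.le
  calc (0.681 : ℝ) ≤ 2.7759 * 0.2456 := by norm_num
    _ ≤ β ^ 2 * Real.pi * (1 + rhoT b t) := by gcongr
end

section
/- Fix ρ ∈ (-1, 1) and real numbers t₁ ≥ t₂. If β/2·(t₁ - t₂)(1 + ρ) ≥ max(φ(t₁), φ(t₂))·D for some D ≥ 0, then β/2·((t₁ - t₂)(1 + ρ)/√(1 - ρ²))·min(φ((t₁ - ρt₂)/√(1-ρ²)), φ((t₂ - ρt₁)/√(1-ρ²))) ≥ (1/(2π√(1-ρ²)))·exp(-(t₁² - 2ρt₁t₂ + t₂²)/(2(1-ρ²)))·D. -/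
/-!
With `s = √(1 - ρ²)` the bivariate normal density factors in two ways,
`phiRho ρ t₁ t₂ = φ(t₂) φ((t₁ - ρ t₂)/s) / s = φ(t₁) φ((t₂ - ρ t₁)/s) / s`.
Bounding the marginal factor by `max (φ t₁) (φ t₂)` in each gives
`phiRho ρ t₁ t₂ · s ≤ max (φ t₁) (φ t₂) · min (conditional factors)`, and the hypothesis
bounds `max (φ t₁) (φ t₂) · D`.
-/

open Real

lemma phi_pos (x : ℝ) : 0 < phi x := by
  unfold phi
  positivity

lemma phiRho_comm (ρ x y : ℝ) : phiRho ρ x y = phiRho ρ y x := by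
  unfold phiRho
  ring_nf

lemma phi_mul_phi_div_sqrt {ρ : ℝ} (hρ : ρ ∈ Set.Ioo (-1 : ℝ) 1) (x y : ℝ) :
    phi y * phi ((x - ρ * y) / √(1 - ρ ^ 2)) / √(1 - ρ ^ 2) = phiRho ρ x y := by
  have hs2 : 0 < 1 - ρ ^ 2 := by nlinarith [hρ.1, hρ.2]
  have hsq : √(1 - ρ ^ 2) ^ 2 = 1 - ρ ^ 2 := sq_sqrt hs2.le
  have hexp : -y ^ 2 / 2 + -((x - ρ * y) / √(1 - ρ ^ 2)) ^ 2 / 2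
      = -(x ^ 2 - 2 * ρ * x * y + y ^ 2) / (2 * (1 - ρ ^ 2)) := by
    rw [div_pow, hsq]
    field_simp
    ring
  unfold phi phiRho
  rw [← hexp, exp_add]
  field_simp
  rw [sq_sqrt (by positivity)]

theorem stmt_13_general (ρ t₁ t₂ β D : ℝ) (hρ : ρ ∈ Set.Ioo (-1 : ℝ) 1) (hD : D ≥ 0)
    (h : β / 2 * ((t₁ - t₂) * (1 + ρ)) ≥ max (phi t₁) (phi t₂) * D) :
    β / 2 * ((t₁ - t₂) * (1 + ρ) / Real.sqrt (1 - ρ ^ 2)) *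
        min (phi ((t₁ - ρ * t₂) / Real.sqrt (1 - ρ ^ 2)))
            (phi ((t₂ - ρ * t₁) / Real.sqrt (1 - ρ ^ 2)))
      ≥ (1 / (2 * Real.pi * Real.sqrt (1 - ρ ^ 2))) *
          Real.exp (-(t₁ ^ 2 - 2 * ρ * t₁ * t₂ + t₂ ^ 2) / (2 * (1 - ρ ^ 2))) * D := by
  set s := √(1 - ρ ^ 2)
  have hs : 0 < s := sqrt_pos.mpr (by nlinarith [hρ.1, hρ.2])
  set A := phi ((t₁ - ρ * t₂) / s)
  set B := phi ((t₂ - ρ * t₁) / s)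
  have hA : phiRho ρ t₁ t₂ * s = phi t₂ * A := by
    rw [← phi_mul_phi_div_sqrt hρ, div_mul_cancel₀ _ hs.ne']
  have hB : phiRho ρ t₁ t₂ * s = phi t₁ * B := by
    rw [phiRho_comm, ← phi_mul_phi_div_sqrt hρ, div_mul_cancel₀ _ hs.ne']
  have hmin : 0 ≤ min A B := le_min (phi_pos _).le (phi_pos _).le
  have key : phiRho ρ t₁ t₂ * s ≤ max (phi t₁) (phi t₂) * min A B := by
    rw [mul_min_of_nonneg _ _ (le_max_of_le_left (phi_pos t₁).le)]
    exact le_min (hA ▸ mul_le_mul_of_nonneg_right (le_max_right _ _) (phi_pos _).le)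
      (hB ▸ mul_le_mul_of_nonneg_right (le_max_left _ _) (phi_pos _).le)
  calc phiRho ρ t₁ t₂ * D = phiRho ρ t₁ t₂ * s * D / s := by field_simp
    _ ≤ max (phi t₁) (phi t₂) * D * min A B / s := by
        rw [mul_right_comm (max _ _)]
        gcongr
    _ ≤ β / 2 * ((t₁ - t₂) * (1 + ρ)) * min A B / s := by gcongr
    _ = β / 2 * ((t₁ - t₂) * (1 + ρ) / s) * min A B := by ring

theorem stmt_13 (ρ t₁ t₂ β D : ℝ) (hρ : ρ ∈ Set.Ioo (-1 : ℝ) 1) (h12 : t₁ ≥ t₂)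
    (hβ : β > 0) (hD : D ≥ 0)
    (h : β / 2 * ((t₁ - t₂) * (1 + ρ)) ≥ max (phi t₁) (phi t₂) * D) :
    β / 2 * ((t₁ - t₂) * (1 + ρ) / Real.sqrt (1 - ρ ^ 2)) *
        min (phi ((t₁ - ρ * t₂) / Real.sqrt (1 - ρ ^ 2)))
            (phi ((t₂ - ρ * t₁) / Real.sqrt (1 - ρ ^ 2)))
      ≥ (1 / (2 * Real.pi * Real.sqrt (1 - ρ ^ 2))) *
          Real.exp (-(t₁ ^ 2 - 2 * ρ * t₁ * t₂ + t₂ ^ 2) / (2 * (1 - ρ ^ 2))) * D :=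
  stmt_13_general ρ t₁ t₂ β D hρ hD h
end
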